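/- Let R be a projective-free ring and let f(t) = t² + at + b ∈ R[t] with 1 + a ∈ J(R) and b ∉ J(R). Then the following are equivalent: (1) every 2 × 2 matrix φ over R with characteristic polynomial χ(φ) = f(t) is strongly J^#-clean; (2) there exist r₁ ∈ J(R) and r₂ ∈ 1 + J(R) such that f(r₁) = 0 and f(r₂) = 0; (3) there exists r ∈ J(R) such that f(r) = 0. -/

import Mathlib

open Polynomial

universe u

/-- The Jacobson radical of a ring: the intersection of all maximal (left) ideals. -/
def jacobsonRadical (R : Type*) [Ring R] : Ideal R := Ideal.jacobson (⊥ : Ideal R)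

/-- `J^#(R) = {x ∈ R : x ^ n ∈ J(R) for some n ∈ ℕ}`. -/
def Jsharp (R : Type*) [Ring R] : Set R :=
  {x | ∃ n : ℕ, 0 < n ∧ x ^ n ∈ jacobsonRadical R}

/-- An element `a` is strongly `J^#`-clean if `a = e + u` with `e` idempotent,
`u ∈ J^#(R)` and `e * a = a * e`. -/
def IsStronglyJsharpClean {R : Type*} [Ring R] (a : R) : Prop :=
  ∃ e : R, IsIdempotentElem e ∧ a - e ∈ Jsharp R ∧ e * a = a * e

/-- A commutative ring is projective-free if every finitely generated projective
module is free. -/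
def IsProjectiveFree (R : Type u) [CommRing R] : Prop :=
  ∀ (M : Type u) [AddCommGroup M] [Module R M],
    Module.Finite R M → Module.Projective R M → Module.Free R M

/-- `𝕁_r`: monic polynomials congruent to `(t - r) ^ deg f` modulo `J^#(R)`. -/
def Jpoly {R : Type*} [CommRing R] (r : R) : Set R[X] :=
  {f | f.Monic ∧ ∀ i, (f - (X - C r) ^ f.natDegree).coeff i ∈ Jsharp R}

/-!
Over a projective-free ring the only idempotents are `0` and `1`, so an idempotent `2 × 2` matrix
`e` is `0`, `1`, or has trace `1` and determinant `0`. If the companion matrix `φ` of `f` is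
strongly `J^#`-clean via `e`, the first two cases put `f(0) = b` or `f(1) = 1 + a + b` in `J(R)`,
so `b ∈ J(R)`. In the remaining case `φ` commutes with the rank-one idempotents `e` and `1 - e`,
hence acts on them by scalars `α` and `β`; Cayley–Hamilton makes these roots of `f`, and a power
of `φ - e` lying in `J(M₂(R))` forces `α ∈ 1 + J(R)` and `β ∈ J(R)`.

Conversely, a root `r ∈ J(R)` gives the second root `s = -a - r ∈ 1 + J(R)`. By Cayley–Hamilton
`(φ - r)(φ - s) = 0`, and as `s - r` is a unit, `e = (s - r)⁻¹ (φ - r)` is an idempotent commuting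
with `φ` such that `φ - e = r + (s - r - 1) e ∈ J(M₂(R))`.
-/

/-- `span {d}` is a direct summand of `R`, hence free; a free module is `0` or faithful, and
`1 - d` annihilates it. -/
theorem IsProjectiveFree.eq_zero_or_one_of_isIdempotentElem {R : Type u} [CommRing R]
    (hR : IsProjectiveFree R) {d : R} (hd : IsIdempotentElem d) : d = 0 ∨ d = 1 := by
  set I := Ideal.span {d}
  have hdI : d ∈ I := Ideal.mem_span_singleton_self d
  have hkill : ∀ x : I, (1 - d) • x = 0 := by
    rintro ⟨x, hx⟩
    obtain ⟨c, rfl⟩ := Ideal.mem_span_singleton'.mp hx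
    ext
    simp only [smul_eq_mul, Submodule.coe_smul, Submodule.coe_zero]
    linear_combination (-c) * hd.eq
  have hproj : Module.Projective R I :=
    .of_split I.subtype (LinearMap.toSpanSingleton R I ⟨d, hdI⟩) <| by
      ext ⟨x, hx⟩
      simpa [sub_smul, sub_eq_zero, eq_comm, mul_comm] using congrArg Subtype.val (hkill ⟨x, hx⟩)
  have hfree := hR I (Module.Finite.iff_fg.mpr (Submodule.fg_span_singleton d)) hproj
  rcases subsingleton_or_nontrivial I with hI | hI
  · exact .inl (congrArg Subtype.val (Subsingleton.elim (⟨d, hdI⟩ : I) 0))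
  · refine .inr (sub_eq_zero.mp (eq_of_smul_eq_smul (α := I) fun x => ?_)).symm
    rw [hkill, zero_smul]

instance (R : Type*) [Ring R] : (jacobsonRadical R).IsTwoSided :=
  inferInstanceAs (Ideal.jacobson ⊥).IsTwoSided

theorem mem_jacobsonRadical_of_pow_mem {R : Type*} [CommRing R] {x : R} {n : ℕ}
    (h : x ^ n ∈ jacobsonRadical R) : x ∈ jacobsonRadical R :=
  Ideal.isRadical_jacobson ⊥ ⟨n, h⟩

theorem Polynomial.aeval_mul_eq_eval_smul {R A : Type*} [CommRing R] [Ring A] [Algebra R A]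
    {x v : A} {c : R} (h : x * v = c • v) (p : R[X]) : aeval x p * v = p.eval c • v := by
  induction p using Polynomial.induction_on with
  | C a => simp [Algebra.smul_def]
  | add p q hp hq => simp [add_mul, add_smul, hp, hq]
  | monomial k a ih =>
    rw [pow_succ, ← mul_assoc, map_mul, aeval_X, mul_assoc, h, mul_smul_comm, ih, smul_smul]
    simp only [eval_mul, eval_C, eval_X, eval_pow]
    ring_nf

theorem Polynomial.eq_mul_of_eval_quadratic_eq_zero {R : Type*} [CommRing R] {a b r : R}
    (hr : (X ^ 2 + C a * X + C b).eval r = 0) :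
    X ^ 2 + C a * X + C b = (X - C r) * (X - C (-a - r)) := by
  have hC := congrArg C hr
  simp only [eval_add, eval_mul, eval_pow, eval_C, eval_X, map_add, map_mul, map_pow,
    map_zero] at hC
  rw [map_sub, map_neg]
  linear_combination hC

theorem exists_isIdempotentElem_of_mul_sub_algebraMap_eq_zero {R A : Type*} [CommRing R] [Ring A]
    [Algebra R A] {x : A} {r s : R} (hu : IsUnit (s - r))
    (h : (x - algebraMap R A r) * (x - algebraMap R A s) = 0) :
    ∃ e : A, IsIdempotentElem e ∧ Commute e x ∧ x - e = algebraMap R A r + (s - r - 1) • e := by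
  obtain ⟨u, hu⟩ := hu
  set y := x - algebraMap R A r
  have hy : y * y = (s - r) • y := by
    have hxs : x - algebraMap R A s = y - algebraMap R A (s - r) := by
      simp only [y, map_sub]; abel
    rw [hxs, mul_sub, sub_eq_zero] at h
    rw [h, Algebra.smul_def, Algebra.commutes]
  have hye : y = (s - r) • ((↑u⁻¹ : R) • y) := by rw [smul_smul, ← hu, u.mul_inv, one_smul]
  refine ⟨(↑u⁻¹ : R) • y, ?_, ?_, ?_⟩
  · rw [IsIdempotentElem, smul_mul_smul_comm, hy, smul_smul, mul_assoc, ← hu, u.inv_mul, mul_one]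
  · exact ((Commute.refl x).sub_left (Algebra.commute_algebraMap_left r x)).smul_left _
  · have hx : x = algebraMap R A r + (s - r) • ((↑u⁻¹ : R) • y) := by rw [← hye]; simp [y]
    conv_lhs => rw [hx]
    rw [sub_smul _ 1, one_smul]
    abel

namespace Matrix

section Square

variable {n : Type*} [Fintype n] [DecidableEq n]

theorem mem_jacobsonRadical_iff {R : Type*} [Ring R] {M : Matrix n n R} :
    M ∈ jacobsonRadical (Matrix n n R) ↔ ∀ i j, M i j ∈ jacobsonRadical R := by
  simp only [jacobsonRadical, ← TwoSidedIdeal.bot_asIdeal, ← TwoSidedIdeal.asIdeal_jacobson,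
    TwoSidedIdeal.mem_asIdeal, ← TwoSidedIdeal.matrix_jacobson_bot, TwoSidedIdeal.mem_matrix]

variable {R : Type*} [CommRing R]

theorem det_mem_of_forall_mem [Nonempty n] {I : Ideal R} {M : Matrix n n R}
    (h : ∀ i j, M i j ∈ I) : M.det ∈ I := by
  rw [← Ideal.Quotient.eq_zero_iff_mem, RingHom.map_det]
  have : (Ideal.Quotient.mk I).mapMatrix M = 0 := by
    ext i j; exact Ideal.Quotient.eq_zero_iff_mem.mpr (h i j)
  rw [this, det_zero]

omit [DecidableEq n] in
theorem trace_mem_of_forall_mem {I : Ideal R} {M : Matrix n n R}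
    (h : ∀ i j, M i j ∈ I) : M.trace ∈ I :=
  Ideal.sum_mem _ fun i _ => h i i

theorem eval_charpoly_eq_zero_of_mul_eq_smul {φ p : Matrix n n R} {c : R} (hp : p.trace = 1)
    (h : φ * p = c • p) : φ.charpoly.eval c = 0 := by
  have := aeval_mul_eq_eval_smul h φ.charpoly
  rw [aeval_self_charpoly, zero_mul] at this
  simpa [hp] using congrArg trace this.symm

theorem mem_jacobsonRadical_of_mul_eq_smul {ψ p : Matrix n n R} {c : R} (hp : p.trace = 1)
    (h : ψ * p = c • p) (hψ : ψ ∈ Jsharp (Matrix n n R)) : c ∈ jacobsonRadical R := by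
  obtain ⟨k, -, hk⟩ := hψ
  have hmem : ψ ^ k * p ∈ jacobsonRadical (Matrix n n R) := Ideal.mul_mem_right _ _ hk
  rw [← aeval_X_pow (R := R), aeval_mul_eq_eval_smul h, eval_pow, eval_X] at hmem
  refine mem_jacobsonRadical_of_pow_mem (n := k) ?_
  simpa [hp] using trace_mem_of_forall_mem (mem_jacobsonRadical_iff.mp hmem)

theorem eval_charpoly_mem_of_sub_scalar_mem [Nonempty n] {φ : Matrix n n R} {c : R}
    (h : φ - scalar n c ∈ Jsharp (Matrix n n R)) : φ.charpoly.eval c ∈ jacobsonRadical R := by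
  obtain ⟨k, -, hk⟩ := h
  have hdet := det_mem_of_forall_mem (mem_jacobsonRadical_iff.mp hk)
  rw [det_pow] at hdet
  rw [eval_charpoly, ← neg_sub, det_neg]
  exact Ideal.mul_mem_left _ _ (mem_jacobsonRadical_of_pow_mem hdet)

theorem isStronglyJsharpClean_of_mul_sub_algebraMap_eq_zero {φ : Matrix n n R} {r s : R}
    (hr : r ∈ jacobsonRadical R) (hs : s - 1 ∈ jacobsonRadical R)
    (h : (φ - algebraMap R _ r) * (φ - algebraMap R _ s) = 0) : IsStronglyJsharpClean φ := by
  have hsr : s - r - 1 ∈ jacobsonRadical R := by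
    simpa only [sub_right_comm] using sub_mem hs hr
  obtain ⟨e, he, hcomm, hsub⟩ := exists_isIdempotentElem_of_mul_sub_algebraMap_eq_zero
    (Ideal.isUnit_of_sub_one_mem_jacobson_bot _ hsr) h
  refine ⟨e, he, ⟨1, one_pos, ?_⟩, hcomm.eq⟩
  rw [pow_one, hsub, mem_jacobsonRadical_iff]
  intro i j
  rw [add_apply, smul_apply, algebraMap_matrix_apply, smul_eq_mul]
  refine add_mem ?_ (Ideal.mul_mem_right _ _ hsr)
  split_ifs
  · exact hr
  · exact zero_mem _

end Square

section FinTwo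

variable {R : Type*} [CommRing R]

theorem mul_self_fin_two (M : Matrix (Fin 2) (Fin 2) R) : M * M = M.trace • M - M.det • 1 := by
  ext i j
  fin_cases i <;> fin_cases j <;>
    simp only [Fin.zero_eta, Fin.mk_one, Fin.isValue, mul_apply, Fin.sum_univ_two, trace_fin_two,
      det_fin_two, sub_apply, smul_apply, smul_eq_mul, one_apply_eq, ne_eq, zero_ne_one,
      one_ne_zero, not_false_eq_true, one_apply_ne, mul_one, mul_zero, sub_zero] <;>
    ring

theorem det_one_sub_fin_two (M : Matrix (Fin 2) (Fin 2) R) :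
    (1 - M).det = 1 - M.trace + M.det := by
  simp only [det_fin_two, Fin.isValue, sub_apply, one_apply_eq, ne_eq, zero_ne_one,
    not_false_eq_true, one_apply_ne, zero_sub, one_ne_zero, mul_neg, neg_mul, neg_neg,
    trace_fin_two]
  ring

theorem mul_mul_eq_trace_smul_of_det_eq_zero {e : Matrix (Fin 2) (Fin 2) R} (he : e.det = 0)
    (M : Matrix (Fin 2) (Fin 2) R) : e * M * e = (e * M).trace • e := by
  rw [det_fin_two] at he
  ext i j
  fin_cases i <;> fin_cases j <;>
    simp only [Fin.zero_eta, Fin.mk_one, Fin.isValue, mul_apply, Fin.sum_univ_two, trace_fin_two,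
      smul_apply, smul_eq_mul] <;>
    grind

theorem isIdempotentElem_fin_two_trichotomy
    (hR : ∀ d : R, IsIdempotentElem d → d = 0 ∨ d = 1) {e : Matrix (Fin 2) (Fin 2) R}
    (he : IsIdempotentElem e) : e = 0 ∨ e = 1 ∨ (e.trace = 1 ∧ e.det = 0) := by
  have hdet_idem : IsIdempotentElem e.det := by
    rw [IsIdempotentElem, ← det_mul, he.eq]
  rcases hR _ hdet_idem with hdet | hdet
  · have hscalar : e = e.trace • e := by
      have := (mul_self_fin_two e).symm.trans he.eq
      rwa [hdet, zero_smul, sub_zero, eq_comm] at this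
    have htr : IsIdempotentElem e.trace := by
      simpa [IsIdempotentElem, trace_smul] using congrArg trace hscalar.symm
    rcases hR _ htr with htr | htr
    · exact .inl (by simpa [htr] using hscalar)
    · exact .inr (.inr ⟨htr, hdet⟩)
  · have hunit : IsUnit e := (isUnit_iff_isUnit_det e).mpr (hdet ▸ isUnit_one)
    exact .inr (.inl ((IsIdempotentElem.iff_eq_one_of_isUnit hunit).mp he))

theorem mul_eq_trace_smul_of_commute {e φ : Matrix (Fin 2) (Fin 2) R} (he : IsIdempotentElem e)
    (hdet : e.det = 0) (hcomm : Commute e φ) : φ * e = (φ * e).trace • e := by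
  calc φ * e = e * φ * e := by rw [hcomm.eq, mul_assoc, he.eq]
    _ = (φ * e).trace • e := by rw [mul_mul_eq_trace_smul_of_det_eq_zero hdet, hcomm.eq]

theorem exists_roots_of_commute_of_trace_eq_one {φ e : Matrix (Fin 2) (Fin 2) R}
    (he : IsIdempotentElem e) (htr : e.trace = 1) (hdet : e.det = 0) (hcomm : Commute e φ)
    (hJ : φ - e ∈ Jsharp (Matrix (Fin 2) (Fin 2) R)) :
    ∃ r₁ r₂ : R, r₁ ∈ jacobsonRadical R ∧ r₂ - 1 ∈ jacobsonRadical R ∧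
      φ.charpoly.eval r₁ = 0 ∧ φ.charpoly.eval r₂ = 0 := by
  have htr' : (1 - e).trace = 1 := by
    rw [trace_sub, trace_one, htr, Fintype.card_fin]; norm_num
  have hdet' : (1 - e).det = 0 := by rw [det_one_sub_fin_two, htr, hdet]; ring
  set α := (φ * e).trace
  set β := (φ * (1 - e)).trace
  have hα : φ * e = α • e := mul_eq_trace_smul_of_commute he hdet hcomm
  have hβ : φ * (1 - e) = β • (1 - e) :=
    mul_eq_trace_smul_of_commute he.one_sub hdet' ((Commute.one_left φ).sub_left hcomm)
  have hαe : (φ - e) * e = (α - 1) • e := by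
    rw [sub_mul, hα, he.eq, sub_smul, one_smul]
  have hβe : (φ - e) * (1 - e) = β • (1 - e) := by
    rw [sub_mul, hβ, he.mul_one_sub_self, sub_zero]
  exact ⟨β, α, mem_jacobsonRadical_of_mul_eq_smul htr' hβe hJ,
    mem_jacobsonRadical_of_mul_eq_smul htr hαe hJ,
    eval_charpoly_eq_zero_of_mul_eq_smul htr' hβ, eval_charpoly_eq_zero_of_mul_eq_smul htr hα⟩

theorem exists_roots_of_isStronglyJsharpClean
    (hR : ∀ d : R, IsIdempotentElem d → d = 0 ∨ d = 1) {φ : Matrix (Fin 2) (Fin 2) R}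
    (hφ : IsStronglyJsharpClean φ) (h₀ : φ.charpoly.eval 0 ∉ jacobsonRadical R)
    (h₁ : φ.charpoly.eval 1 ∉ jacobsonRadical R) :
    ∃ r₁ r₂ : R, r₁ ∈ jacobsonRadical R ∧ r₂ - 1 ∈ jacobsonRadical R ∧
      φ.charpoly.eval r₁ = 0 ∧ φ.charpoly.eval r₂ = 0 := by
  obtain ⟨e, he, hJ, hcomm⟩ := hφ
  rcases isIdempotentElem_fin_two_trichotomy hR he with rfl | rfl | ⟨htr, hdet⟩
  · exact (h₀ (eval_charpoly_mem_of_sub_scalar_mem (by simpa using hJ))).elim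
  · exact (h₁ (eval_charpoly_mem_of_sub_scalar_mem (by simpa using hJ))).elim
  · exact exists_roots_of_commute_of_trace_eq_one he htr hdet hcomm hJ

theorem charpoly_fin_two_companion (a b : R) :
    (!![0, -b; 1, -a] : Matrix (Fin 2) (Fin 2) R).charpoly = X ^ 2 + C a * X + C b := by
  rw [charpoly, det_fin_two]
  simp only [Fin.isValue, charmatrix_apply_eq, of_apply, cons_val', cons_val_zero,
    cons_val_fin_one, map_zero, sub_zero, cons_val_one, map_neg, sub_neg_eq_add, ne_eq,
    zero_ne_one, not_false_eq_true, charmatrix_apply_ne, neg_neg, one_ne_zero, map_one, mul_neg,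
    mul_one]
  ring

end FinTwo

end Matrix

/-- for `f = t² + at + b` with `1 + a ∈ J(R)`, `b ∉ J(R)` over a
projective-free ring, TFAE: every `2 × 2` matrix with characteristic polynomial `f`
is strongly `J^#`-clean; `f` has roots `r₁ ∈ J(R)` and `r₂ ∈ 1 + J(R)`; `f` has a
root in `J(R)`. -/
theorem stronglyJsharpClean_quadratic_tfae {R : Type u} [CommRing R]
    (hR : IsProjectiveFree R) (a b : R) (f : R[X]) (hf : f = X ^ 2 + C a * X + C b)
    (ha : 1 + a ∈ jacobsonRadical R) (hb : b ∉ jacobsonRadical R) :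
    ((∀ φ : Matrix (Fin 2) (Fin 2) R, φ.charpoly = f → IsStronglyJsharpClean φ) ↔
      (∃ r₁ r₂ : R, r₁ ∈ jacobsonRadical R ∧ r₂ - 1 ∈ jacobsonRadical R ∧
        f.eval r₁ = 0 ∧ f.eval r₂ = 0)) ∧
    ((∃ r₁ r₂ : R, r₁ ∈ jacobsonRadical R ∧ r₂ - 1 ∈ jacobsonRadical R ∧
        f.eval r₁ = 0 ∧ f.eval r₂ = 0) ↔
      ∃ r ∈ jacobsonRadical R, f.eval r = 0) := by
  subst hf
  refine (fun h12 h23 h31 => ⟨⟨h12, h31 ∘ h23⟩, ⟨h23, h12 ∘ h31⟩⟩) ?_ ?_ ?_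
  · intro h
    have hc := Matrix.charpoly_fin_two_companion a b
    rw [← hc]
    refine Matrix.exists_roots_of_isStronglyJsharpClean
      (fun _ => hR.eq_zero_or_one_of_isIdempotentElem) (h _ hc) ?_ ?_ <;> rw [hc]
    · simpa using hb
    · exact fun h₁ => hb (by simpa using sub_mem h₁ ha)
  · rintro ⟨r₁, -, hr₁, -, hf₁, -⟩
    exact ⟨r₁, hr₁, hf₁⟩
  · rintro ⟨r, hr, hfr⟩ φ hφ
    refine Matrix.isStronglyJsharpClean_of_mul_sub_algebraMap_eq_zero hr (s := -a - r) ?_ ?_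
    · convert neg_mem (add_mem ha hr) using 1; ring
    · simpa [hφ, eq_mul_of_eval_quadratic_eq_zero hfr] using Matrix.aeval_self_charpoly φ
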